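/- arXiv:math/0407224 — 5 statements merged into one kernel-verified Lean document; each statement's English description precedes it below -/
import Mathlib

section
/- Strassen's algorithm: the 2×2 matrix multiplication tensor has rank at most 7, i.e., there exist α^i, β^i ∈ M₂(ℂ)* and c_i ∈ M₂(ℂ), i = 1,…,7, such that XY = Σ_{i=1}^7 α^i(X) β^i(Y) c_i for all 2×2 matrices X, Y. -/
/-- Linear functional on 2×2 matrices given by coefficients. -/
def lf (a b c d : ℂ) : Matrix (Fin 2) (Fin 2) ℂ →ₗ[ℂ] ℂ where
  toFun X := a * X 0 0 + b * X 0 1 + c * X 1 0 + d * X 1 1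
  map_add' X Y := by simp [Matrix.add_apply]; ring
  map_smul' r X := by simp [Matrix.smul_apply]; ring

/-- Strassen: 2×2 matrix multiplication is a sum of 7 rank-one tensors. -/
theorem stmt5 :
    ∃ (α β : Fin 7 → (Matrix (Fin 2) (Fin 2) ℂ →ₗ[ℂ] ℂ))
      (c : Fin 7 → Matrix (Fin 2) (Fin 2) ℂ),
      ∀ X Y : Matrix (Fin 2) (Fin 2) ℂ, X * Y = ∑ i, (α i X * β i Y) • c i := by
  refine ⟨![lf 1 0 0 1, lf 0 0 1 1, lf 1 0 0 0, lf 0 0 0 1, lf 1 1 0 0,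
            lf (-1) 0 1 0, lf 0 1 0 (-1)],
          ![lf 1 0 0 1, lf 1 0 0 0, lf 0 1 0 (-1), lf (-1) 0 1 0, lf 0 0 0 1,
            lf 1 1 0 0, lf 0 0 1 1],
          ![!![1,0;0,1], !![0,0;1,-1], !![0,1;0,1], !![1,0;1,0], !![-1,1;0,0],
            !![0,0;0,1], !![1,0;0,0]], ?_⟩
  intro X Y
  ext i j
  fin_cases i <;> fin_cases j <;>
    simp [Matrix.mul_apply, Fin.sum_univ_succ, lf, Matrix.sum_apply] <;> ring
end

section
/- With the same setup (x_r = Σ c_j x_j and the t coefficient of x₁(t) ∧ ⋯ ∧ x_r(t) vanishing, so that x_r' − Σ_j c_j x_j' = Σ_j e_j x_j for some scalars e_j), the coefficient of t² in x₁(t) ∧ ⋯ ∧ x_r(t) equals ±(Σ_{k=1}^{r−1} e_k x_k' + Σ_{j=1}^{r−1} c_j x_j'' − x_r'') ∧ x₁ ∧ ⋯ ∧ x_{r−1}. -/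
open PowerSeries ExteriorAlgebra

section Aux

variable {V : Type*} [AddCommGroup V] [Module ℂ V]

/-- The power series with coefficients `ι (u m)`. -/
noncomputable def serAux (u : ℕ → V) : PowerSeries (ExteriorAlgebra ℂ V) :=
  PowerSeries.mk fun m => ExteriorAlgebra.ι ℂ (u m)

lemma iota_anticomm (a b : V) :
    ExteriorAlgebra.ι ℂ a * ExteriorAlgebra.ι ℂ b
      = -(ExteriorAlgebra.ι ℂ b * ExteriorAlgebra.ι ℂ a) :=
  eq_neg_of_add_eq_zero_left (ExteriorAlgebra.ι_add_mul_swap a b)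

lemma serAux_anticomm (u w : ℕ → V) : serAux u * serAux w = -(serAux w * serAux u) := by
  ext k
  rw [map_neg, PowerSeries.coeff_mul, PowerSeries.coeff_mul, ← Finset.sum_neg_distrib]
  conv_rhs => rw [← Finset.HasAntidiagonal.map_prodComm_antidiagonal, Finset.sum_map]
  refine Finset.sum_congr rfl fun p _ => ?_
  simp only [Function.Embedding.coeFn_mk, Equiv.coe_toEmbedding, Equiv.prodComm_apply, Prod.fst_swap, Prod.snd_swap, serAux,
    PowerSeries.coeff_mk]
  exact iota_anticomm (u p.1) (w p.2)

lemma serAux_sq (u : ℕ → V) : serAux u * serAux u = 0 := by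
  have h : serAux u * serAux u = -(serAux u * serAux u) := serAux_anticomm u u
  have h2 : (2 : ℂ) • (serAux u * serAux u) = 0 := by
    rw [two_smul]
    nth_rewrite 2 [h]
    simp
  calc serAux u * serAux u = ((2 : ℂ)⁻¹ * 2) • (serAux u * serAux u) := by norm_num
    _ = (2 : ℂ)⁻¹ • ((2 : ℂ) • (serAux u * serAux u)) := mul_smul _ _ _
    _ = 0 := by rw [h2, smul_zero]

lemma prod_serAux_mul (L : List (ℕ → V)) (u : ℕ → V) :
    (L.map serAux).prod * serAux u
      = ((-1 : ℂ) ^ L.length) • (serAux u * (L.map serAux).prod) := by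
  induction L with
  | nil => simp
  | cons a L ih =>
    simp only [List.map_cons, List.prod_cons, List.length_cons, mul_assoc, ih]
    rw [mul_smul_comm, ← mul_assoc, serAux_anticomm a u, pow_succ, mul_comm _ (-1 : ℂ),
      mul_smul]
    simp [mul_assoc]

lemma prod_serAux_mul_mem (L : List (ℕ → V)) (u : ℕ → V) (hu : u ∈ L) :
    (L.map serAux).prod * serAux u = 0 := by
  induction L with
  | nil => simp at hu
  | cons a L ih =>
    simp only [List.map_cons, List.prod_cons, mul_assoc]
    rcases List.mem_cons.mp hu with h | h
    · subst h
      rw [prod_serAux_mul, mul_smul_comm, ← mul_assoc, serAux_sq, zero_mul, smul_zero]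
    · rw [ih h, mul_zero]

lemma prod_iota_mul (L : List V) (v : V) :
    (L.map (ExteriorAlgebra.ι ℂ)).prod * ExteriorAlgebra.ι ℂ v
      = ((-1 : ℂ) ^ L.length) • (ExteriorAlgebra.ι ℂ v * (L.map (ExteriorAlgebra.ι ℂ)).prod) := by
  induction L with
  | nil => simp
  | cons a L ih =>
    simp only [List.map_cons, List.prod_cons, List.length_cons, mul_assoc, ih]
    rw [mul_smul_comm, ← mul_assoc, iota_anticomm a v, pow_succ, mul_comm _ (-1 : ℂ),
      mul_smul]
    simp [mul_assoc]

end Aux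

/-- With x_r = Σ c_j x_j and the t coefficient of x₁(t) ∧ ⋯ ∧ x_r(t) vanishing,
so that x_r′ − Σ c_j x_j′ = Σ e_j x_j, the coefficient of t² equals
±(Σ e_k x_k′ + Σ c_j x_j″ − x_r″) ∧ x₁ ∧ ⋯ ∧ x_{r−1}.  Here r = n+1 and the
curve x_j(t) has Taylor coefficients x j m. -/
theorem stmt8 (V : Type*) [AddCommGroup V] [Module ℂ V] [FiniteDimensional ℂ V]
    (n : ℕ) (x : Fin (n + 1) → ℕ → V) (c e : Fin n → ℂ)
    (hindep : LinearIndependent ℂ (fun j : Fin n => x j.castSucc 0))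
    (hdep : x (Fin.last n) 0 = ∑ j, c j • x j.castSucc 0)
    (hdep' : x (Fin.last n) 1 - ∑ j, c j • x j.castSucc 1 = ∑ j, e j • x j.castSucc 0) :
    ∃ ε : ℂ, (ε = 1 ∨ ε = -1) ∧
      PowerSeries.coeff 2
        ((List.ofFn fun j : Fin (n + 1) =>
          PowerSeries.mk fun m => ExteriorAlgebra.ι ℂ (x j m)).prod) =
      ε •
        (ExteriorAlgebra.ι ℂ
            ((∑ j, e j • x j.castSucc 1) + (∑ j, c j • x j.castSucc 2)
              - x (Fin.last n) 2) *
          (List.ofFn fun j : Fin n => ExteriorAlgebra.ι ℂ (x j.castSucc 0)).prod) := by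
  classical
  set v : V := (∑ j, e j • x j.castSucc 1) + (∑ j, c j • x j.castSucc 2) - x (Fin.last n) 2
    with hv
  set L : List (ℕ → V) := List.ofFn fun j : Fin n => x j.castSucc with hL
  set W : PowerSeries (ExteriorAlgebra ℂ V) := (L.map serAux).prod with hW
  -- split off the last factor
  have hsplit : (List.ofFn fun j : Fin (n + 1) =>
      PowerSeries.mk fun m => ExteriorAlgebra.ι ℂ (x j m)).prod
      = W * serAux (x (Fin.last n)) := by
    have : (List.ofFn fun j : Fin (n + 1) =>
        PowerSeries.mk fun m => ExteriorAlgebra.ι ℂ (x j m))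
        = (List.ofFn fun j : Fin (n + 1) => serAux (x j)) := rfl
    rw [this, List.ofFn_succ', List.concat_eq_append, List.prod_append, List.prod_cons,
      List.prod_nil, mul_one, hW, hL, List.map_ofFn]
    rfl
  -- W kills each serAux (x j.castSucc)
  have hkill : ∀ j : Fin n, W * serAux (x j.castSucc) = 0 := fun j =>
    prod_serAux_mul_mem L _ (by rw [hL, List.mem_ofFn]; exact ⟨j, rfl⟩)
  -- the remainder term T
  set T : PowerSeries (ExteriorAlgebra ℂ V) :=
    serAux (x (Fin.last n)) - (∑ j, c j • serAux (x j.castSucc))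
      - PowerSeries.X * (∑ j, e j • serAux (x j.castSucc)) with hT
  have hWT : W * serAux (x (Fin.last n)) = W * T := by
    rw [hT]
    rw [mul_sub, mul_sub]
    have h1 : W * (∑ j, c j • serAux (x j.castSucc)) = 0 := by
      rw [Finset.mul_sum]
      refine Finset.sum_eq_zero fun j _ => ?_
      rw [mul_smul_comm, hkill j, smul_zero]
    have h2 : W * (PowerSeries.X * (∑ j, e j • serAux (x j.castSucc))) = 0 := by
      rw [← mul_assoc, (PowerSeries.commute_X W).eq, mul_assoc, Finset.mul_sum]
      have : (∑ j, W * (e j • serAux (x j.castSucc))) = 0 := by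
        refine Finset.sum_eq_zero fun j _ => ?_
        rw [mul_smul_comm, hkill j, smul_zero]
      rw [this, mul_zero]
    rw [h1, h2, sub_zero, sub_zero]
  -- coefficients of T
  have hT0 : PowerSeries.coeff 0 T = 0 := by
    rw [hT]
    simp only [map_sub, map_sum, PowerSeries.coeff_smul, PowerSeries.coeff_zero_X_mul, serAux,
      PowerSeries.coeff_mk, sub_zero]
    rw [sub_eq_zero, hdep]
    simp [map_sum]
  have hT1 : PowerSeries.coeff 1 T = 0 := by
    rw [hT]
    have hx : PowerSeries.coeff 1
        (PowerSeries.X * (∑ j, e j • serAux (x j.castSucc)))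
        = PowerSeries.coeff 0 (∑ j, e j • serAux (x j.castSucc)) :=
      PowerSeries.coeff_succ_X_mul 0 _
    rw [map_sub, map_sub, hx]
    simp only [map_sum, PowerSeries.coeff_smul, serAux, PowerSeries.coeff_mk]
    have := congrArg (ExteriorAlgebra.ι ℂ) hdep'
    simp only [map_sub, map_sum, map_smul] at this
    rw [sub_sub, sub_eq_zero, ← this]
    abel
  have hT2 : PowerSeries.coeff 2 T = -ExteriorAlgebra.ι ℂ v := by
    rw [hT]
    have hx : PowerSeries.coeff 2
        (PowerSeries.X * (∑ j, e j • serAux (x j.castSucc)))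
        = PowerSeries.coeff 1 (∑ j, e j • serAux (x j.castSucc)) :=
      PowerSeries.coeff_succ_X_mul 1 _
    rw [map_sub, map_sub, hx]
    simp only [map_sum, PowerSeries.coeff_smul, serAux, PowerSeries.coeff_mk]
    rw [hv]
    simp only [map_sub, map_add, map_sum, map_smul]
    abel
  -- compute coefficient 2 of W * T
  have hcoeff : PowerSeries.coeff 2 (W * T)
      = PowerSeries.constantCoeff W * (-ExteriorAlgebra.ι ℂ v) := by
    rw [PowerSeries.coeff_mul, Finset.Nat.sum_antidiagonal_eq_sum_range_succ_mk]
    rw [Finset.sum_range_succ, Finset.sum_range_succ, Finset.sum_range_one]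
    simp only [Nat.sub_self, Nat.sub_zero]
    rw [hT2, hT1, hT0]
    simp [PowerSeries.coeff_zero_eq_constantCoeff]
  -- constant coefficient of W
  set y : List V := List.ofFn fun j : Fin n => x j.castSucc 0 with hy
  have hconst : PowerSeries.constantCoeff W
      = (y.map (ExteriorAlgebra.ι ℂ)).prod := by
    rw [hW, map_list_prod, List.map_map, hL, hy, List.map_ofFn, List.map_ofFn]
    congr 1
  have hlen : y.length = n := by rw [hy]; simp
  refine ⟨(-1 : ℂ) ^ (n + 1), ?_, ?_⟩
  · rcases Nat.even_or_odd (n + 1) with h | h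
    · exact Or.inl h.neg_one_pow
    · exact Or.inr h.neg_one_pow
  · have hPQ : (List.ofFn fun j : Fin n => ExteriorAlgebra.ι ℂ (x j.castSucc 0))
        = y.map (ExteriorAlgebra.ι ℂ) := by rw [hy, List.map_ofFn]; rfl
    rw [hsplit, hWT, hcoeff, hconst, mul_neg, prod_iota_mul, hlen, hPQ, pow_succ, mul_smul,
      neg_one_smul, smul_neg]
end

section
/- More generally, if only x₁, …, x_p among the limit points are linearly independent and x_s = Σ_j c_s^j x_j for p+1 ≤ s ≤ r, then the coefficient of t^{r−p} in x₁(t) ∧ ⋯ ∧ x_r(t) equals, up to sign, x₁ ∧ ⋯ ∧ x_p ∧ (Σ_j c_{p+1}^j x_j' − x_{p+1}') ∧ ⋯ ∧ (Σ_j c_r^j x_j' − x_r'), and all lower-order coefficients (in t^0, …, t^{r−p−1}) vanish. -/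
section Aux

variable {V : Type*} [AddCommGroup V] [Module ℂ V]

local notation "E" => ExteriorAlgebra ℂ V

/-- The power series with coefficients `ι (x k)`. -/
noncomputable def mkIota (x : ℕ → V) : PowerSeries E :=
  PowerSeries.mk fun k => ExteriorAlgebra.ι ℂ (x k)

theorem mkIota_anticomm (x y : ℕ → V) :
    mkIota x * mkIota y = -(mkIota y * mkIota x) := by
  ext m
  rw [map_neg, PowerSeries.coeff_mul, PowerSeries.coeff_mul,
    ← Finset.Nat.sum_antidiagonal_swap
      (f := fun z : ℕ × ℕ =>
        PowerSeries.coeff z.1 (mkIota y) * PowerSeries.coeff z.2 (mkIota x)),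
    ← Finset.sum_neg_distrib]
  refine Finset.sum_congr rfl fun z _ => ?_
  simp only [mkIota, PowerSeries.coeff_mk, Prod.fst_swap, Prod.snd_swap]
  exact eq_neg_of_add_eq_zero_left (ExteriorAlgebra.ι_add_mul_swap _ _)

theorem mkIota_sq (x : ℕ → V) : mkIota x * mkIota x = 0 := by
  have h := mkIota_anticomm x x
  have h2 : (2 : ℂ) • (mkIota x * mkIota x) = 0 := by
    rw [two_smul]
    exact add_eq_zero_iff_eq_neg.2 h
  rcases smul_eq_zero.1 h2 with h | h
  · exact absurd h two_ne_zero
  · exact h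

/-- Moving a factor past a list of anticommuting factors. -/
theorem mul_list_prod_anticomm (f : PowerSeries E) :
    ∀ l : List (PowerSeries E), (∀ g ∈ l, f * g = -(g * f)) →
      f * l.prod = ((-1 : ℂ) ^ l.length) • (l.prod * f)
  | [], _ => by simp
  | a :: t, h => by
    have ha := h a List.mem_cons_self
    have ht := mul_list_prod_anticomm f t fun g hg => h g (List.mem_cons_of_mem a hg)
    calc f * (a :: t).prod = (f * a) * t.prod := by rw [List.prod_cons, mul_assoc]
      _ = -(a * (f * t.prod)) := by rw [ha, neg_mul, mul_assoc]
      _ = -(a * (((-1 : ℂ) ^ t.length) • (t.prod * f))) := by rw [ht]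
      _ = (-((-1 : ℂ) ^ t.length)) • ((a :: t).prod * f) := by
          rw [mul_smul_comm, ← neg_smul, List.prod_cons, mul_assoc]
      _ = ((-1 : ℂ) ^ (a :: t).length) • ((a :: t).prod * f) := by
          rw [List.length_cons, pow_succ, mul_neg_one]

/-- A list of pairwise anticommuting square-zero elements kills any of its members. -/
theorem list_prod_mul_self_mem :
    ∀ l : List (PowerSeries E),
      (∀ g ∈ l, ∀ h ∈ l, g * h = -(h * g)) → (∀ g ∈ l, g * g = 0) →
      ∀ f ∈ l, l.prod * f = 0
  | [], _, _, f, hf => absurd hf List.not_mem_nil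
  | a :: t, hanti, hsq, f, hf => by
    rcases List.mem_cons.1 hf with rfl | hft
    · have hmov : f * t.prod = ((-1 : ℂ) ^ t.length) • (t.prod * f) :=
        mul_list_prod_anticomm f t fun g hg =>
          hanti f List.mem_cons_self g (List.mem_cons_of_mem f hg)
      have hsf : f * f = 0 := hsq f List.mem_cons_self
      calc (f :: t).prod * f = f * t.prod * f := by rw [List.prod_cons]
        _ = (((-1 : ℂ) ^ t.length) • (t.prod * f)) * f := by rw [hmov]
        _ = ((-1 : ℂ) ^ t.length) • (t.prod * (f * f)) := by
            rw [smul_mul_assoc, mul_assoc]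
        _ = 0 := by rw [hsf, mul_zero, smul_zero]
    · have ht : t.prod * f = 0 :=
        list_prod_mul_self_mem t
          (fun g hg h hh =>
            hanti g (List.mem_cons_of_mem a hg) h (List.mem_cons_of_mem a hh))
          (fun g hg => hsq g (List.mem_cons_of_mem a hg)) f hft
      rw [List.prod_cons, mul_assoc, ht, mul_zero]

theorem mkIota_sub_combination {p : ℕ} (u : Fin p → ℕ → V) (w : ℕ → V) (c : Fin p → ℂ) :
    mkIota (fun k => (∑ j, c j • u j k) - w k)
      = (∑ j, c j • mkIota (u j)) - mkIota (w) := by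
  ext m
  simp [mkIota, PowerSeries.coeff_mk, map_sum, map_smul, map_sub]

/-- Key reduction: replacing the dependent series by the differences, up to sign. -/
theorem key_reduction {p : ℕ} (u : Fin p → ℕ → V) :
    ∀ (q : ℕ) (w : Fin q → ℕ → V) (c : Fin q → Fin p → ℂ) (A : PowerSeries E),
      (∀ j, A * mkIota (u j) = 0) →
      A * (List.ofFn fun s => mkIota (w s)).prod
        = ((-1 : ℂ) ^ q) •
          (A * (List.ofFn fun s =>
            mkIota (fun k => (∑ j, c s j • u j k) - w s k)).prod)
  | 0, w, c, A, hA => by simp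
  | q + 1, w, c, A, hA => by
    have hG0 : mkIota (fun k => (∑ j, c 0 j • u j k) - w 0 k)
        = (∑ j, c 0 j • mkIota (u j)) - mkIota (w 0) :=
      mkIota_sub_combination u (w 0) (c 0)
    have hAW0 : A * mkIota (w 0)
        = -(A * mkIota (fun k => (∑ j, c 0 j • u j k) - w 0 k)) := by
      rw [hG0, mul_sub, Finset.mul_sum]
      simp only [mul_smul_comm, hA, smul_zero, Finset.sum_const_zero, zero_sub, neg_neg]
    set A' : PowerSeries E := A * mkIota (fun k => (∑ j, c 0 j • u j k) - w 0 k) with hA'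
    have hA'j : ∀ j, A' * mkIota (u j) = 0 := by
      intro j
      rw [hA', mul_assoc, mkIota_anticomm, mul_neg, ← mul_assoc, hA j, zero_mul, neg_zero]
    have ih : A' * (List.ofFn fun s : Fin q => mkIota (w s.succ)).prod
        = ((-1 : ℂ) ^ q) • (A' * (List.ofFn fun s : Fin q =>
            mkIota (fun k => (∑ j, c s.succ j • u j k) - w s.succ k)).prod) :=
      key_reduction u q (fun s => w s.succ) (fun s => c s.succ) A' hA'j
    rw [List.ofFn_succ, List.ofFn_succ (f := fun s : Fin (q + 1) =>
      mkIota fun k => (∑ j, c s j • u j k) - w s k), List.prod_cons, List.prod_cons,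
      ← mul_assoc, hAW0, neg_mul, ih, hA', mul_assoc, pow_succ, mul_neg_one, neg_smul]

/-- Products of series with vanishing constant term: low coefficients vanish. -/
theorem coeff_lt_length_prod :
    ∀ l : List (PowerSeries E), (∀ f ∈ l, PowerSeries.coeff 0 f = 0) →
      ∀ m < l.length, PowerSeries.coeff m l.prod = 0
  | [], _, m, hm => absurd hm (Nat.not_lt_zero m)
  | a :: t, h, m, hm => by
    rw [List.length_cons] at hm
    rw [List.prod_cons, PowerSeries.coeff_mul]
    refine Finset.sum_eq_zero fun z hz => ?_
    rcases Nat.eq_zero_or_pos z.1 with h1 | h1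
    · rw [h1, h a List.mem_cons_self, zero_mul]
    · have hz2 : z.2 < t.length := by
        have := Finset.HasAntidiagonal.mem_antidiagonal.1 hz
        omega
      rw [coeff_lt_length_prod t (fun f hf => h f (List.mem_cons_of_mem a hf)) z.2 hz2,
        mul_zero]

/-- Products of series with vanishing constant term: leading coefficient. -/
theorem coeff_length_prod :
    ∀ l : List (PowerSeries E), (∀ f ∈ l, PowerSeries.coeff 0 f = 0) →
      PowerSeries.coeff l.length l.prod = (l.map (PowerSeries.coeff (R := E) 1)).prod
  | [], _ => by simp
  | a :: t, h => by
    rw [List.prod_cons, PowerSeries.coeff_mul, List.map_cons, List.prod_cons,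
      ← coeff_length_prod t (fun f hf => h f (List.mem_cons_of_mem a hf))]
    rw [List.length_cons]
    refine Finset.sum_eq_single (1, t.length) (fun z hz hne => ?_) (fun hmem => ?_)
    · have hz' := Finset.HasAntidiagonal.mem_antidiagonal.1 hz
      rcases Nat.eq_zero_or_pos z.1 with h1 | h1
      · rw [h1, h a List.mem_cons_self, zero_mul]
      · have hz2 : z.2 < t.length := by
          rcases Nat.lt_or_ge z.1 2 with h2 | h2
          · exfalso; apply hne
            have : z.1 = 1 := by omega
            have : z.2 = t.length := by omega
            exact Prod.ext ‹z.1 = 1› ‹z.2 = t.length›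
          · omega
        rw [coeff_lt_length_prod t (fun f hf => h f (List.mem_cons_of_mem a hf)) z.2 hz2,
          mul_zero]
    · exact absurd (Finset.HasAntidiagonal.mem_antidiagonal.2 (by omega)) hmem

end Aux

/-- If only x₁, …, x_p are linearly independent and x_s = Σ_j c_s^j x_j for
p+1 ≤ s ≤ r (curves u for the independent points, w for the dependent ones,
q = r − p), then the coefficients of t⁰, …, t^{q−1} in x₁(t) ∧ ⋯ ∧ x_r(t)
vanish and the coefficient of t^q equals, up to sign,
x₁ ∧ ⋯ ∧ x_p ∧ (Σ c x′ − x_{p+1}′) ∧ ⋯ ∧ (Σ c x′ − x_r′). -/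
theorem stmt9 (V : Type*) [AddCommGroup V] [Module ℂ V] [FiniteDimensional ℂ V]
    (p q : ℕ) (u : Fin p → ℕ → V) (w : Fin q → ℕ → V) (c : Fin q → Fin p → ℂ)
    (hindep : LinearIndependent ℂ (fun j : Fin p => u j 0))
    (hdep : ∀ s : Fin q, w s 0 = ∑ j, c s j • u j 0) :
    (∀ m : ℕ, m < q →
      PowerSeries.coeff m
        ((List.ofFn (fun j : Fin p => PowerSeries.mk fun k => ExteriorAlgebra.ι ℂ (u j k)) ++
          List.ofFn (fun s : Fin q => PowerSeries.mk fun k => ExteriorAlgebra.ι ℂ (w s k))).prod)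
        = 0) ∧
    ∃ ε : ℂ, (ε = 1 ∨ ε = -1) ∧
      PowerSeries.coeff q
        ((List.ofFn (fun j : Fin p => PowerSeries.mk fun k => ExteriorAlgebra.ι ℂ (u j k)) ++
          List.ofFn (fun s : Fin q => PowerSeries.mk fun k => ExteriorAlgebra.ι ℂ (w s k))).prod)
      = ε •
        ((List.ofFn fun j : Fin p => ExteriorAlgebra.ι ℂ (u j 0)).prod *
          (List.ofFn fun s : Fin q =>
            ExteriorAlgebra.ι ℂ ((∑ j, c s j • u j 1) - w s 1)).prod) := by
  classical
  set Ul : List (PowerSeries (ExteriorAlgebra ℂ V)) :=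
    List.ofFn fun j : Fin p => mkIota (u j) with hUl
  set Wl : List (PowerSeries (ExteriorAlgebra ℂ V)) :=
    List.ofFn fun s : Fin q => mkIota (w s) with hWl
  set Gl : List (PowerSeries (ExteriorAlgebra ℂ V)) :=
    List.ofFn fun s : Fin q => mkIota (fun k => (∑ j, c s j • u j k) - w s k) with hGl
  -- Each element of Ul is killed on the right of Ul.prod.
  have hUkill : ∀ j : Fin p, Ul.prod * mkIota (u j) = 0 := by
    intro j
    refine list_prod_mul_self_mem Ul ?_ ?_ (mkIota (u j)) ?_
    · intro g hg h hh
      obtain ⟨i, rfl⟩ := List.mem_ofFn.1 hg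
      obtain ⟨i', rfl⟩ := List.mem_ofFn.1 hh
      exact mkIota_anticomm _ _
    · intro g hg
      obtain ⟨i, rfl⟩ := List.mem_ofFn.1 hg
      exact mkIota_sq _
    · exact List.mem_ofFn.2 ⟨j, rfl⟩
  have hkey : Ul.prod * Wl.prod = ((-1 : ℂ) ^ q) • (Ul.prod * Gl.prod) :=
    key_reduction u q w c Ul.prod hUkill
  -- constant coefficients of Gl vanish
  have hG0 : ∀ f ∈ Gl, PowerSeries.coeff 0 f = 0 := by
    intro f hf
    obtain ⟨s, rfl⟩ := List.mem_ofFn.1 hf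
    have h0 : (∑ j, c s j • u j 0) - w s 0 = 0 := by rw [hdep s, sub_self]
    simp only [mkIota, PowerSeries.coeff_mk]
    rw [h0, map_zero]
  have hGlen : Gl.length = q := by rw [hGl, List.length_ofFn]
  have hprodsplit :
      (List.ofFn (fun j : Fin p => PowerSeries.mk fun k => ExteriorAlgebra.ι ℂ (u j k)) ++
        List.ofFn (fun s : Fin q => PowerSeries.mk fun k => ExteriorAlgebra.ι ℂ (w s k))).prod
      = Ul.prod * Wl.prod := by
    rw [List.prod_append]; rfl
  constructor
  · intro m hm
    rw [hprodsplit, hkey, PowerSeries.coeff_smul, PowerSeries.coeff_mul]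
    rw [Finset.sum_eq_zero, smul_zero]
    intro z hz
    have hz' := Finset.HasAntidiagonal.mem_antidiagonal.1 hz
    have : z.2 < Gl.length := by omega
    rw [coeff_lt_length_prod Gl hG0 z.2 this, mul_zero]
  · refine ⟨(-1 : ℂ) ^ q, ?_, ?_⟩
    · rcases Nat.even_or_odd q with h | h
      · exact Or.inl (h.neg_one_pow)
      · exact Or.inr (h.neg_one_pow)
    · rw [hprodsplit, hkey, PowerSeries.coeff_smul, PowerSeries.coeff_mul]
      have hsingle :
          ∑ z ∈ Finset.HasAntidiagonal.antidiagonal q,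
            PowerSeries.coeff z.1 Ul.prod *
              PowerSeries.coeff z.2 Gl.prod
          = PowerSeries.coeff 0 Ul.prod *
              PowerSeries.coeff q Gl.prod := by
        refine Finset.sum_eq_single (0, q) (fun z hz hne => ?_) (fun hmem => ?_)
        · have hz' := Finset.HasAntidiagonal.mem_antidiagonal.1 hz
          have hz2 : z.2 < Gl.length := by
            rw [hGlen]
            rcases Nat.eq_zero_or_pos z.1 with h1 | h1
            · exfalso; exact hne (Prod.ext h1 (by omega))
            · omega
          rw [coeff_lt_length_prod Gl hG0 z.2 hz2, mul_zero]
        · exact absurd (Finset.HasAntidiagonal.mem_antidiagonal.2 (by omega)) hmem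
      rw [hsingle]
      -- compute the two coefficients
      have hc0 : PowerSeries.coeff 0 Ul.prod
          = (List.ofFn fun j : Fin p => ExteriorAlgebra.ι ℂ (u j 0)).prod := by
        rw [PowerSeries.coeff_zero_eq_constantCoeff, hUl,
          map_list_prod (PowerSeries.constantCoeff (R := ExteriorAlgebra ℂ V)), List.map_ofFn]
        rfl
      have hcq : PowerSeries.coeff q Gl.prod
          = (List.ofFn fun s : Fin q =>
              ExteriorAlgebra.ι ℂ ((∑ j, c s j • u j 1) - w s 1)).prod := by
        have hlp := coeff_length_prod Gl hG0
        rw [hGlen] at hlp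
        rw [hlp, hGl, List.map_ofFn]
        have hfun : (⇑(PowerSeries.coeff (R := ExteriorAlgebra ℂ V) 1) ∘
              fun s : Fin q => mkIota fun k => (∑ j, c s j • u j k) - w s k)
            = fun s : Fin q => ExteriorAlgebra.ι ℂ ((∑ j, c s j • u j 1) - w s 1) := by
          funext s
          simp only [Function.comp_apply, mkIota, PowerSeries.coeff_mk]
        rw [hfun]
      rw [hc0, hcq]
end

section
/- Any line in ℙ(A ⊗ B ⊗ C) that meets the Segre variety Seg(ℙA × ℙB × ℙC) in at least three points is entirely contained in the Segre variety. Equivalently, if three pairwise non-proportional simple tensors in A ⊗ B ⊗ C are linearly dependent, then every tensor in their 2-dimensional span is simple. -/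
open scoped TensorProduct

section segre_aux

variable {M N : Type*} [AddCommGroup M] [Module ℂ M] [AddCommGroup N] [Module ℂ N]

private lemma segre_dual_ne {a : M} (ha : a ≠ 0) : ∃ f : Module.Dual ℂ M, f a = 1 := by
  have h : a ∉ (⊥ : Submodule ℂ M) := by simpa
  obtain ⟨f, hf, -⟩ := Submodule.exists_dual_map_eq_bot_of_notMem h inferInstance
  exact ⟨(f a)⁻¹ • f, by simp [inv_mul_cancel₀ hf]⟩

private lemma segre_dual_pair {a a' : M} (h : a ∉ Submodule.span ℂ {a'}) :
    ∃ f : Module.Dual ℂ M, f a = 1 ∧ f a' = 0 := by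
  obtain ⟨f, hf, hbot⟩ := Submodule.exists_dual_map_eq_bot_of_notMem h inferInstance
  have h0 : f a' = 0 := by
    have := Submodule.mem_map_of_mem (f := f) (Submodule.mem_span_singleton_self a')
    rw [hbot] at this
    simpa using this
  exact ⟨(f a)⁻¹ • f, by simp [inv_mul_cancel₀ hf], by simp [h0]⟩

private lemma segre_applyDual (f : Module.Dual ℂ M) (p m : M) (q n : N)
    (h : p ⊗ₜ[ℂ] q = m ⊗ₜ[ℂ] n) : f p • q = f m • n := by
  have := congrArg ((TensorProduct.lid ℂ N).toLinearMap ∘ₗ f.rTensor N) h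
  simpa using this

private lemma segre_keyLemma (p : M) (q : N) (a a' : M) (u u' : N)
    (h : p ⊗ₜ[ℂ] q = a ⊗ₜ[ℂ] u + a' ⊗ₜ[ℂ] u') :
    (a' ∈ Submodule.span ℂ {a} ∨ a ∈ Submodule.span ℂ {a'}) ∨
    (u' ∈ Submodule.span ℂ {u} ∨ u ∈ Submodule.span ℂ {u'}) := by
  by_cases h1 : a' ∈ Submodule.span ℂ {a}
  · exact Or.inl (Or.inl h1)
  by_cases h2 : a ∈ Submodule.span ℂ {a'}
  · exact Or.inl (Or.inr h2)
  obtain ⟨f, hfa, hfa'⟩ := segre_dual_pair h2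
  obtain ⟨g, hga', hga⟩ := segre_dual_pair h1
  have hφ : ∀ (f : Module.Dual ℂ M) (m : M) (n : N),
      ((TensorProduct.lid ℂ N).toLinearMap ∘ₗ f.rTensor N) (m ⊗ₜ[ℂ] n) = f m • n := by
    intro f m n; simp
  have hu : f p • q = u := by
    have := congrArg ((TensorProduct.lid ℂ N).toLinearMap ∘ₗ f.rTensor N) h
    rw [map_add] at this
    simpa [hφ, hfa, hfa'] using this
  have hu' : g p • q = u' := by
    have := congrArg ((TensorProduct.lid ℂ N).toLinearMap ∘ₗ g.rTensor N) h
    rw [map_add] at this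
    simpa [hφ, hga', hga] using this
  by_cases hfp : f p = 0
  · exact Or.inr (Or.inr (by rw [← hu, hfp, zero_smul]; exact Submodule.zero_mem _))
  · refine Or.inr (Or.inl ?_)
    rw [Submodule.mem_span_singleton]
    refine ⟨g p * (f p)⁻¹, ?_⟩
    rw [← hu, ← hu', smul_smul, mul_assoc, inv_mul_cancel₀ hfp, mul_one]

private lemma segre_inner {b b' : M} {c c' : N} (hu : b ⊗ₜ[ℂ] c ≠ 0) (hv : b' ⊗ₜ[ℂ] c' ≠ 0)
    {γ δ : ℂ} (hγ : γ ≠ 0) (hδ : δ ≠ 0)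
    (hs : ∃ m n, γ • (b ⊗ₜ[ℂ] c) + δ • (b' ⊗ₜ[ℂ] c') = m ⊗ₜ[ℂ] n)
    (s t : ℂ) : ∃ m n, s • (b ⊗ₜ[ℂ] c) + t • (b' ⊗ₜ[ℂ] c') = m ⊗ₜ[ℂ] n := by
  obtain ⟨m, n, hmn⟩ := hs
  have heq : m ⊗ₜ[ℂ] n = b ⊗ₜ[ℂ] (γ • c) + b' ⊗ₜ[ℂ] (δ • c') := by
    rw [← hmn, TensorProduct.tmul_smul, TensorProduct.tmul_smul]
  rcases segre_keyLemma m n b b' (γ • c) (δ • c') heq with (h1 | h1) | (h1 | h1)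
  · obtain ⟨μ, rfl⟩ := Submodule.mem_span_singleton.mp h1
    refine ⟨b, s • c + (t * μ) • c', ?_⟩
    simp only [TensorProduct.tmul_add, TensorProduct.add_tmul, TensorProduct.tmul_smul,
      ← TensorProduct.smul_tmul', smul_smul]
    try module
  · obtain ⟨μ, rfl⟩ := Submodule.mem_span_singleton.mp h1
    refine ⟨b', (s * μ) • c + t • c', ?_⟩
    simp only [TensorProduct.tmul_add, TensorProduct.add_tmul, TensorProduct.tmul_smul,
      ← TensorProduct.smul_tmul', smul_smul]
    try module
  · obtain ⟨μ, hμ⟩ := Submodule.mem_span_singleton.mp h1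
    have hcc : c' = (δ⁻¹ * (μ * γ)) • c := by
      calc c' = δ⁻¹ • (δ • c') := by rw [inv_smul_smul₀ hδ]
        _ = δ⁻¹ • (μ • (γ • c)) := by rw [hμ]
        _ = (δ⁻¹ * (μ * γ)) • c := by rw [smul_smul, smul_smul, mul_assoc]
    subst hcc
    refine ⟨s • b + (t * (δ⁻¹ * (μ * γ))) • b', c, ?_⟩
    simp only [TensorProduct.tmul_add, TensorProduct.add_tmul, TensorProduct.tmul_smul,
      ← TensorProduct.smul_tmul', smul_smul]
    try module
  · obtain ⟨μ, hμ⟩ := Submodule.mem_span_singleton.mp h1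
    have hcc : c = (γ⁻¹ * (μ * δ)) • c' := by
      calc c = γ⁻¹ • (γ • c) := by rw [inv_smul_smul₀ hγ]
        _ = γ⁻¹ • (μ • (δ • c')) := by rw [hμ]
        _ = (γ⁻¹ * (μ * δ)) • c' := by rw [smul_smul, smul_smul, mul_assoc]
    subst hcc
    refine ⟨(s * (γ⁻¹ * (μ * δ))) • b + t • b', c', ?_⟩
    simp only [TensorProduct.tmul_add, TensorProduct.add_tmul, TensorProduct.tmul_smul,
      ← TensorProduct.smul_tmul', smul_smul]
    try module

end segre_aux

section segre_outer

variable {A B C : Type*} [AddCommGroup A] [Module ℂ A] [AddCommGroup B] [Module ℂ B]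
  [AddCommGroup C] [Module ℂ C]

private lemma segre_colinear (a a' e : A) (σ σ' : ℂ) (hσ : σ ≠ 0) (hσ' : σ' ≠ 0) (he : e ≠ 0)
    (haa : a = σ • e) (ha'a : a' = σ' • e)
    (b b' : B) (c c' : C)
    (hbc : b ⊗ₜ[ℂ] c ≠ (0 : B ⊗[ℂ] C)) (hbc' : b' ⊗ₜ[ℂ] c' ≠ (0 : B ⊗[ℂ] C))
    {α β : ℂ} (hα : α ≠ 0) (hβ : β ≠ 0)
    (p : A) (bq : B) (cq : C)
    (hz : α • (a ⊗ₜ[ℂ] (b ⊗ₜ[ℂ] c)) + β • (a' ⊗ₜ[ℂ] (b' ⊗ₜ[ℂ] c'))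
      = p ⊗ₜ[ℂ] (bq ⊗ₜ[ℂ] cq))
    (s t : ℂ) :
    ∃ m n o, s • (a ⊗ₜ[ℂ] (b ⊗ₜ[ℂ] c)) + t • (a' ⊗ₜ[ℂ] (b' ⊗ₜ[ℂ] c'))
      = m ⊗ₜ[ℂ] (n ⊗ₜ[ℂ] o) := by
  subst haa ha'a
  obtain ⟨f, hf⟩ := segre_dual_ne he
  have hE : e ⊗ₜ[ℂ] ((α * σ) • (b ⊗ₜ[ℂ] c) + (β * σ') • (b' ⊗ₜ[ℂ] c'))
      = p ⊗ₜ[ℂ] (bq ⊗ₜ[ℂ] cq) := by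
    rw [← hz]
    simp only [TensorProduct.tmul_add, TensorProduct.add_tmul, TensorProduct.tmul_smul,
      ← TensorProduct.smul_tmul', smul_smul]
    try module
  have h2 := segre_applyDual f p e (bq ⊗ₜ[ℂ] cq) _ hE.symm
  rw [hf, one_smul] at h2
  have hQ : (α * σ) • (b ⊗ₜ[ℂ] c) + (β * σ') • (b' ⊗ₜ[ℂ] c')
      = (f p • bq) ⊗ₜ[ℂ] cq := by
    rw [← h2, TensorProduct.smul_tmul']
  obtain ⟨m, n, hmn⟩ := segre_inner hbc hbc' (mul_ne_zero hα hσ) (mul_ne_zero hβ hσ')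
    ⟨_, _, hQ⟩ (s * σ) (t * σ')
  refine ⟨e, m, n, ?_⟩
  rw [← hmn]
  simp only [TensorProduct.tmul_add, TensorProduct.add_tmul, TensorProduct.tmul_smul,
    ← TensorProduct.smul_tmul', smul_smul]
  try module

private lemma segre_tri (a a' : A) (u u' : B ⊗[ℂ] C)
    (hu : ∃ b c, u = b ⊗ₜ[ℂ] c) (hu' : ∃ b c, u' = b ⊗ₜ[ℂ] c)
    (hx0 : a ⊗ₜ[ℂ] u ≠ 0) (hy0 : a' ⊗ₜ[ℂ] u' ≠ 0)
    {α β : ℂ} (hα : α ≠ 0) (hβ : β ≠ 0)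
    (p : A) (q : B ⊗[ℂ] C) (hq : ∃ b c, q = b ⊗ₜ[ℂ] c)
    (hz : α • (a ⊗ₜ[ℂ] u) + β • (a' ⊗ₜ[ℂ] u') = p ⊗ₜ[ℂ] q)
    (s t : ℂ) :
    ∃ m n o, s • (a ⊗ₜ[ℂ] u) + t • (a' ⊗ₜ[ℂ] u') = m ⊗ₜ[ℂ] (n ⊗ₜ[ℂ] o) := by
  have ha : a ≠ 0 := by rintro rfl; simp at hx0
  have hune : u ≠ 0 := by rintro rfl; simp at hx0
  have ha' : a' ≠ 0 := by rintro rfl; simp at hy0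
  have hu'ne : u' ≠ 0 := by rintro rfl; simp at hy0
  obtain ⟨b, c, rfl⟩ := hu
  obtain ⟨b', c', rfl⟩ := hu'
  obtain ⟨bq, cq, rfl⟩ := hq
  have hz' : p ⊗ₜ[ℂ] (bq ⊗ₜ[ℂ] cq)
      = a ⊗ₜ[ℂ] (α • (b ⊗ₜ[ℂ] c)) + a' ⊗ₜ[ℂ] (β • (b' ⊗ₜ[ℂ] c')) := by
    rw [← hz, TensorProduct.tmul_smul, TensorProduct.tmul_smul]
  rcases segre_keyLemma p (bq ⊗ₜ[ℂ] cq) a a' _ _ hz' with (h1 | h1) | (h1 | h1)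
  · obtain ⟨μ, hμ⟩ := Submodule.mem_span_singleton.mp h1
    have hμ0 : μ ≠ 0 := by rintro rfl; rw [zero_smul] at hμ; exact ha' hμ.symm
    exact segre_colinear a a' a 1 μ one_ne_zero hμ0 ha (one_smul ℂ a).symm hμ.symm
      b b' c c' hune hu'ne hα hβ p bq cq hz s t
  · obtain ⟨μ, hμ⟩ := Submodule.mem_span_singleton.mp h1
    have hμ0 : μ ≠ 0 := by rintro rfl; rw [zero_smul] at hμ; exact ha hμ.symm
    exact segre_colinear a a' a' μ 1 hμ0 one_ne_zero ha' hμ.symm (one_smul ℂ a').symm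
      b b' c c' hune hu'ne hα hβ p bq cq hz s t
  · obtain ⟨μ, hμ⟩ := Submodule.mem_span_singleton.mp h1
    have h2 : b' ⊗ₜ[ℂ] c' = (β⁻¹ * (μ * α)) • (b ⊗ₜ[ℂ] c) := by
      calc b' ⊗ₜ[ℂ] c' = β⁻¹ • (β • (b' ⊗ₜ[ℂ] c')) := by rw [inv_smul_smul₀ hβ]
        _ = β⁻¹ • (μ • (α • (b ⊗ₜ[ℂ] c))) := by rw [hμ]
        _ = (β⁻¹ * (μ * α)) • (b ⊗ₜ[ℂ] c) := by rw [smul_smul, smul_smul, mul_assoc]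
    rw [h2]
    refine ⟨s • a + (t * (β⁻¹ * (μ * α))) • a', b, c, ?_⟩
    simp only [TensorProduct.tmul_add, TensorProduct.add_tmul, TensorProduct.tmul_smul,
      ← TensorProduct.smul_tmul', smul_smul]
    try module
  · obtain ⟨μ, hμ⟩ := Submodule.mem_span_singleton.mp h1
    have h2 : b ⊗ₜ[ℂ] c = (α⁻¹ * (μ * β)) • (b' ⊗ₜ[ℂ] c') := by
      calc b ⊗ₜ[ℂ] c = α⁻¹ • (α • (b ⊗ₜ[ℂ] c)) := by rw [inv_smul_smul₀ hα]
        _ = α⁻¹ • (μ • (β • (b' ⊗ₜ[ℂ] c'))) := by rw [hμ]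
        _ = (α⁻¹ * (μ * β)) • (b' ⊗ₜ[ℂ] c') := by rw [smul_smul, smul_smul, mul_assoc]
    rw [h2]
    refine ⟨(s * (α⁻¹ * (μ * β))) • a + t • a', b', c', ?_⟩
    simp only [TensorProduct.tmul_add, TensorProduct.add_tmul, TensorProduct.tmul_smul,
      ← TensorProduct.smul_tmul', smul_smul]
    try module

end segre_outer

/-- A trisecant line of the Segre is contained in it: if three pairwise
non-proportional nonzero simple tensors are linearly dependent, then every
tensor in their span is simple. -/
theorem stmt13 (A B C : Type*) [AddCommGroup A] [Module ℂ A] [AddCommGroup B] [Module ℂ B]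
    [AddCommGroup C] [Module ℂ C]
    [FiniteDimensional ℂ A] [FiniteDimensional ℂ B] [FiniteDimensional ℂ C]
    (x y z : A ⊗[ℂ] (B ⊗[ℂ] C))
    (hx0 : x ≠ 0) (hy0 : y ≠ 0) (hz0 : z ≠ 0)
    (hx : ∃ a b c, x = a ⊗ₜ[ℂ] (b ⊗ₜ[ℂ] c))
    (hy : ∃ a b c, y = a ⊗ₜ[ℂ] (b ⊗ₜ[ℂ] c))
    (hz : ∃ a b c, z = a ⊗ₜ[ℂ] (b ⊗ₜ[ℂ] c))
    (hxy : ∀ l : ℂ, y ≠ l • x) (hyz : ∀ l : ℂ, z ≠ l • y) (hxz : ∀ l : ℂ, z ≠ l • x)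
    (hdep : ∃ lx ly lz : ℂ, ¬(lx = 0 ∧ ly = 0 ∧ lz = 0) ∧ lx • x + ly • y + lz • z = 0) :
    ∀ T ∈ Submodule.span ℂ ({x, y, z} : Set (A ⊗[ℂ] (B ⊗[ℂ] C))),
      ∃ a b c, T = a ⊗ₜ[ℂ] (b ⊗ₜ[ℂ] c) := by
  obtain ⟨lx, ly, lz, h0, heq⟩ := hdep
  -- all three coefficients are nonzero
  have hlz : lz ≠ 0 := by
    intro h
    rw [h, zero_smul, add_zero] at heq
    by_cases hly : ly = 0
    · rw [hly, zero_smul, add_zero] at heq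
      have hlx : lx ≠ 0 := by tauto
      exact hx0 ((smul_eq_zero.mp heq).resolve_left hlx)
    · refine hxy (-(lx / ly)) ?_
      have h3 : ly • y = -(lx • x) := eq_neg_of_add_eq_zero_right heq
      calc y = ly⁻¹ • (ly • y) := (inv_smul_smul₀ hly y).symm
        _ = ly⁻¹ • (-(lx • x)) := by rw [h3]
        _ = (-(lx / ly)) • x := by match_scalars; field_simp
  have hly : ly ≠ 0 := by
    intro h
    rw [h, zero_smul, add_zero] at heq
    by_cases hlz' : lz = 0
    · rw [hlz', zero_smul, add_zero] at heq
      have hlx : lx ≠ 0 := by tauto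
      exact hx0 ((smul_eq_zero.mp heq).resolve_left hlx)
    · refine hxz (-(lx / lz)) ?_
      have h3 : lz • z = -(lx • x) := eq_neg_of_add_eq_zero_right heq
      calc z = lz⁻¹ • (lz • z) := (inv_smul_smul₀ hlz' z).symm
        _ = lz⁻¹ • (-(lx • x)) := by rw [h3]
        _ = (-(lx / lz)) • x := by match_scalars; field_simp
  have hlx : lx ≠ 0 := by
    intro h
    rw [h, zero_smul, zero_add] at heq
    by_cases hlz' : lz = 0
    · rw [hlz', zero_smul, add_zero] at heq
      exact hy0 ((smul_eq_zero.mp heq).resolve_left hly)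
    · refine hyz (-(ly / lz)) ?_
      have h3 : lz • z = -(ly • y) := eq_neg_of_add_eq_zero_right heq
      calc z = lz⁻¹ • (lz • z) := (inv_smul_smul₀ hlz' z).symm
        _ = lz⁻¹ • (-(ly • y)) := by rw [h3]
        _ = (-(ly / lz)) • y := by match_scalars; field_simp
  -- z lies on the line through x and y
  have hz2 : z = (-(lx / lz)) • x + (-(ly / lz)) • y := by
    have h3 : lz • z = -(lx • x + ly • y) := eq_neg_of_add_eq_zero_right heq
    calc z = lz⁻¹ • (lz • z) := (inv_smul_smul₀ hlz z).symm
      _ = lz⁻¹ • (-(lx • x + ly • y)) := by rw [h3]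
      _ = (-(lx / lz)) • x + (-(ly / lz)) • y := by match_scalars <;> field_simp
  have hα : -(lx / lz) ≠ 0 := neg_ne_zero.mpr (div_ne_zero hlx hlz)
  have hβ : -(ly / lz) ≠ 0 := neg_ne_zero.mpr (div_ne_zero hly hlz)
  have hsub : Submodule.span ℂ ({x, y, z} : Set (A ⊗[ℂ] (B ⊗[ℂ] C)))
      ≤ Submodule.span ℂ ({x, y} : Set (A ⊗[ℂ] (B ⊗[ℂ] C))) := by
    rw [Submodule.span_le]
    rintro w hw
    simp only [Set.mem_insert_iff, Set.mem_singleton_iff] at hw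
    rcases hw with rfl | rfl | rfl
    · exact Submodule.subset_span (by simp)
    · exact Submodule.subset_span (by simp)
    · exact Submodule.mem_span_pair.mpr ⟨-(lx / lz), -(ly / lz), hz2.symm⟩
  intro T hT
  obtain ⟨s, t, hst⟩ := Submodule.mem_span_pair.mp (hsub hT)
  obtain ⟨a1, b1, c1, rfl⟩ := hx
  obtain ⟨a2, b2, c2, rfl⟩ := hy
  obtain ⟨a3, b3, c3, rfl⟩ := hz
  have hztensor : (-(lx / lz)) • (a1 ⊗ₜ[ℂ] (b1 ⊗ₜ[ℂ] c1))
      + (-(ly / lz)) • (a2 ⊗ₜ[ℂ] (b2 ⊗ₜ[ℂ] c2)) = a3 ⊗ₜ[ℂ] (b3 ⊗ₜ[ℂ] c3) := hz2.symm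
  obtain ⟨m, n, o, hmno⟩ := segre_tri a1 a2 (b1 ⊗ₜ[ℂ] c1) (b2 ⊗ₜ[ℂ] c2)
    ⟨b1, c1, rfl⟩ ⟨b2, c2, rfl⟩ hx0 hy0 hα hβ a3 (b3 ⊗ₜ[ℂ] c3) ⟨b3, c3, rfl⟩ hztensor s t
  exact ⟨m, n, o, by rw [← hst, hmno]⟩
end

section
/- Suppose M ∈ A* ⊗ B* ⊗ C equals φ₁ + φ₂ where φ₂ = α ⊗ β ⊗ c is a simple tensor, and there are subspaces A₀ ⊂ A*, C₀ ⊂ C with φ₁ ∈ A₀ ⊗ B* ⊗ C and image of φ₁ contained in C₀. If M is the 2×2 matrix multiplication tensor (under identifications A* = B* = C* = M₂(ℂ)*) and dim C₀ = 2, with α vanishing on a nonzero element a and β vanishing on a nonzero element b such that a annihilates φ₂ on the left and b on the right, then M(a, ·) and M(·, b) have images equal to the same 2-dimensional subspace of M₂(ℂ), which contradicts the fact that in M₂(ℂ) no 2-dimensional subspace is simultaneously a nonzero proper left ideal and right ideal. -/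
/-!
If `α a = 0` then `a * y = φ₁ a y ∈ C₀` for every `y`, so the right ideal `a M₂(ℂ)` lies in `C₀`;
likewise the left ideal `M₂(ℂ) b` lies in `C₀`. A nonzero right or left ideal of `Mₙ(K)` has
dimension at least `n`, so both ideals equal the plane `C₀`. A subspace that is both a principal
right ideal `aR` and a principal left ideal `Rb` is a two-sided ideal, hence all of the simple
ring `M₂(ℂ)`, which has dimension `4`, not `2`.
-/

open Module

theorem IsSimpleRing.surjective_mul_left_of_range_eq {R : Type*} [Ring R] [IsSimpleRing R]
    {a b : R} (ha : a ≠ 0) (h : Set.range (a * ·) = Set.range (· * b)) :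
    Function.Surjective (a * ·) := by
  let I : TwoSidedIdeal R := .mk' (Set.range (a * ·)) ⟨0, mul_zero a⟩
    (by rintro _ _ ⟨y, rfl⟩ ⟨z, rfl⟩; exact ⟨y + z, mul_add a y z⟩)
    (by rintro _ ⟨y, rfl⟩; exact ⟨-y, mul_neg a y⟩)
    (fun {x _} hy => by
      rw [h] at hy ⊢
      obtain ⟨z, rfl⟩ := hy
      exact ⟨x * z, mul_assoc x z b⟩)
    (by rintro _ y ⟨z, rfl⟩; exact ⟨z * y, (mul_assoc a z y).symm⟩)
  have ha_mem : a ∈ I := (TwoSidedIdeal.mem_mk' ..).2 ⟨1, mul_one a⟩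
  obtain ⟨u, hu⟩ : (1 : R) ∈ Set.range (a * ·) :=
    (TwoSidedIdeal.mem_mk' ..).1 (one_mem_of_ne_zero_mem I ha ha_mem)
  exact fun x => ⟨u * x, by simp only [← mul_assoc, hu, one_mul]⟩

namespace Matrix

variable {K n : Type*} [Field K] [Fintype n] [DecidableEq n]

theorem card_le_finrank_range_mulLeft {a : Matrix n n K} (ha : a ≠ 0) :
    Fintype.card n ≤ finrank K (LinearMap.range (LinearMap.mulLeft K a)) := by
  obtain ⟨i, j, hij⟩ : ∃ i j, a i j ≠ 0 := by
    by_contra! h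
    exact ha (ext h)
  -- column `l` of `a * single j l 1` is column `j` of `a`, and all its other columns vanish
  set v : n → Matrix n n K := fun l => a * single j l 1
  have hv : LinearIndependent K v := by
    rw [Fintype.linearIndependent_iff]
    intro g hg l
    have hil := congr_fun (congr_fun hg i) l
    rw [sum_apply, Finset.sum_eq_single l (fun l' _ hl' => by
      simp only [v, smul_apply, mul_single_apply_of_ne (hbj := Ne.symm hl'), smul_zero])
      (by simp)] at hil
    simpa [v, mul_single_apply_same, hij] using hil
  calc Fintype.card n = finrank K (Submodule.span K (Set.range v)) := (finrank_span_eq_card hv).symm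
    _ ≤ _ := Submodule.finrank_mono <| Submodule.span_le.2 <| by
        rintro _ ⟨l, rfl⟩
        exact ⟨_, rfl⟩

theorem range_mulRight_eq_map_transpose (b : Matrix n n K) :
    LinearMap.range (LinearMap.mulRight K b) =
      (LinearMap.range (LinearMap.mulLeft K bᵀ)).map
        (transposeLinearEquiv n n K K : Matrix n n K →ₗ[K] Matrix n n K) := by
  ext x
  simp only [LinearMap.mem_range, LinearMap.mulRight_apply, Submodule.mem_map,
    LinearMap.mulLeft_apply, LinearEquiv.coe_coe, transposeLinearEquiv_apply, exists_exists_eq_and]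
  refine ⟨fun ⟨y, hy⟩ => ⟨yᵀ, ?_⟩, fun ⟨y, hy⟩ => ⟨yᵀ, ?_⟩⟩
  · change (bᵀ * yᵀ)ᵀ = x
    simpa only [transpose_mul, transpose_transpose] using hy
  · change (bᵀ * y)ᵀ = x at hy
    simpa only [transpose_mul, transpose_transpose] using hy

theorem card_le_finrank_range_mulRight {b : Matrix n n K} (hb : b ≠ 0) :
    Fintype.card n ≤ finrank K (LinearMap.range (LinearMap.mulRight K b)) := by
  rw [range_mulRight_eq_map_transpose, LinearEquiv.finrank_map_eq]
  exact card_le_finrank_range_mulLeft (mt transpose_eq_zero.1 hb)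

end Matrix

/-- If 2×2 matrix multiplication were φ₁ + φ₂ with φ₂ = α ⊗ β ⊗ c simple, the
image of φ₁ contained in a 2-dimensional subspace C₀, and α, β vanishing on
nonzero elements a, b respectively, then a·M₂(ℂ) and M₂(ℂ)·b would both equal
C₀, contradicting that no 2-dimensional subspace of M₂(ℂ) is simultaneously a
nonzero proper left ideal and right ideal.  Hence no such configuration exists. -/
theorem stmt17 (φ₁ : Matrix (Fin 2) (Fin 2) ℂ → Matrix (Fin 2) (Fin 2) ℂ →
      Matrix (Fin 2) (Fin 2) ℂ)
    (α β : Matrix (Fin 2) (Fin 2) ℂ →ₗ[ℂ] ℂ) (c : Matrix (Fin 2) (Fin 2) ℂ)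
    (C₀ : Submodule ℂ (Matrix (Fin 2) (Fin 2) ℂ))
    (hC₀ : Module.finrank ℂ C₀ = 2)
    (hφ₁ : ∀ x y, φ₁ x y ∈ C₀)
    (hM : ∀ x y, x * y = φ₁ x y + (α x * β y) • c)
    (a b : Matrix (Fin 2) (Fin 2) ℂ) (ha : a ≠ 0) (hb : b ≠ 0)
    (hα : α a = 0) (hβ : β b = 0) :
    False := by
  have hleft : LinearMap.range (LinearMap.mulLeft ℂ a) = C₀ := by
    refine Submodule.eq_of_le_of_finrank_le ?_ ?_
    · rintro _ ⟨y, rfl⟩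
      simpa [hM a y, hα] using hφ₁ a y
    · simpa [hC₀] using Matrix.card_le_finrank_range_mulLeft ha
  have hright : LinearMap.range (LinearMap.mulRight ℂ b) = C₀ := by
    refine Submodule.eq_of_le_of_finrank_le ?_ ?_
    · rintro _ ⟨x, rfl⟩
      simpa [hM x b, hβ] using hφ₁ x b
    · simpa [hC₀] using Matrix.card_le_finrank_range_mulRight hb
  have hsurj : Function.Surjective (a * ·) := by
    refine IsSimpleRing.surjective_mul_left_of_range_eq (b := b) ha ?_
    have hrange := congrArg SetLike.coe (hleft.trans hright.symm)
    rwa [LinearMap.coe_range, LinearMap.coe_range] at hrange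
  have htop : C₀ = ⊤ := hleft ▸ LinearMap.range_eq_top.2 hsurj
  rw [htop, finrank_top, finrank_matrix] at hC₀
  simp at hC₀
end
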